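/- Let n ≥ m. The coefficient of α^n β^m in ∑_{i=0}^{n} ∑_{j=0}^{m} β^{n−i} α^{m−j} α^i β^j, computed in ℤ[α,β]/(α^{n+1}, β^{m+1}), equals m+1. Consequently, a generic bilinear form on ℂ^{n+1} × ℂ^{m+1} has exactly m+1 classes of singular vector pairs. -/
import Mathlib


open MvPolynomial Matrix

/-- For `n ≥ m`, the coefficient of `α^n β^m` in `∑_{i=0}^{n} ∑_{j=0}^{m} β^{n−i} α^{m−j} α^i β^j`,
computed in `ℤ[α,β]/(α^{n+1}, β^{m+1})`, equals `m+1`; consequently a generic bilinear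
form on `ℂ^{n+1} × ℂ^{m+1}` has exactly `m+1` classes of singular vector pairs. -/
theorem stmt17 (n m : ℕ) (hnm : m ≤ n) :
    (Ideal.Quotient.mk (Ideal.span {(X 0 : MvPolynomial (Fin 2) ℤ) ^ (n + 1),
        (X 1 : MvPolynomial (Fin 2) ℤ) ^ (m + 1)})
      (∑ i ∈ Finset.range (n + 1), ∑ j ∈ Finset.range (m + 1),
        (X 1 : MvPolynomial (Fin 2) ℤ) ^ (n - i) * X 0 ^ (m - j) * X 0 ^ i * X 1 ^ j) =
     Ideal.Quotient.mk (Ideal.span {(X 0 : MvPolynomial (Fin 2) ℤ) ^ (n + 1),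
        (X 1 : MvPolynomial (Fin 2) ℤ) ^ (m + 1)})
      ((m + 1 : ℤ) • (X 0 ^ n * X 1 ^ m))) ∧
    ∀ A : Matrix (Fin (n + 1)) (Fin (m + 1)) ℂ,
      -- genericity: `AᵀA` has `m+1` distinct nonzero eigenvalues
      (∃ μ : Fin (m + 1) → ℂ, Function.Injective μ ∧ (∀ i, μ i ≠ 0) ∧
        ∀ i, ∃ v : Fin (m + 1) → ℂ, v ≠ 0 ∧ (Aᵀ * A).mulVec v = μ i • v) →
      {T : Submodule ℂ (Fin (n + 1) → ℂ) × Submodule ℂ (Fin (m + 1) → ℂ) |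
        ∃ x y, x ≠ 0 ∧ y ≠ 0 ∧
          T = (Submodule.span ℂ {x}, Submodule.span ℂ {y}) ∧
          ∃ μ ν : ℂ, A.mulVec y = μ • x ∧ Aᵀ.mulVec x = ν • y}.ncard = m + 1 := by
  constructor
  · -- the cohomological computation in the quotient ring
    set I : Ideal (MvPolynomial (Fin 2) ℤ) := Ideal.span {(X 0 : MvPolynomial (Fin 2) ℤ) ^ (n + 1),
        (X 1 : MvPolynomial (Fin 2) ℤ) ^ (m + 1)} with hI
    set a : MvPolynomial (Fin 2) ℤ ⧸ I := Ideal.Quotient.mk I (X 0) with ha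
    set b : MvPolynomial (Fin 2) ℤ ⧸ I := Ideal.Quotient.mk I (X 1) with hb
    have ha0 : a ^ (n + 1) = 0 := by
      rw [ha, ← map_pow, Ideal.Quotient.eq_zero_iff_mem]
      exact Ideal.subset_span (Set.mem_insert _ _)
    have hb0 : b ^ (m + 1) = 0 := by
      rw [hb, ← map_pow, Ideal.Quotient.eq_zero_iff_mem]
      exact Ideal.subset_span (Set.mem_insert_of_mem _ rfl)
    have haz : ∀ k, n + 1 ≤ k → a ^ k = 0 := fun k hk => pow_eq_zero_of_le hk ha0
    have hbz : ∀ k, m + 1 ≤ k → b ^ k = 0 := fun k hk => pow_eq_zero_of_le hk hb0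
    simp only [map_sum, _root_.map_mul, map_pow, map_zsmul, ← ha, ← hb]
    rw [Finset.sum_comm]
    have key : ∀ j ∈ Finset.range (m + 1),
        (∑ i ∈ Finset.range (n + 1), b ^ (n - i) * a ^ (m - j) * a ^ i * b ^ j)
          = a ^ n * b ^ m := by
      intro j hj
      rw [Finset.mem_range] at hj
      have hj' : j ≤ m := by omega
      rw [Finset.sum_eq_single_of_mem (n - m + j) (Finset.mem_range.2 (by omega))]
      · have h1 : n - (n - m + j) = m - j := by omega
        have h2 : a ^ n = a ^ (m - j) * a ^ (n - m + j) := by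
          rw [← pow_add]; congr 1; omega
        have h3 : b ^ m = b ^ (m - j) * b ^ j := by
          rw [← pow_add]; congr 1; omega
        rw [h1, h2, h3]; ring
      · intro i hi hne
        rw [Finset.mem_range] at hi
        rcases lt_or_gt_of_ne hne with hlt | hgt
        · have hz : b ^ (n - i) * b ^ j = 0 := by
            rw [← pow_add]; exact hbz _ (by omega)
          calc b ^ (n - i) * a ^ (m - j) * a ^ i * b ^ j
              = (b ^ (n - i) * b ^ j) * (a ^ (m - j) * a ^ i) := by ring
            _ = 0 := by rw [hz, zero_mul]
        · have hz : a ^ (m - j) * a ^ i = 0 := by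
            rw [← pow_add]; exact haz _ (by omega)
          calc b ^ (n - i) * a ^ (m - j) * a ^ i * b ^ j
              = (a ^ (m - j) * a ^ i) * (b ^ (n - i) * b ^ j) := by ring
            _ = 0 := by rw [hz, zero_mul]
    rw [Finset.sum_congr rfl key, Finset.sum_const, Finset.card_range]
    simp only [nsmul_eq_mul, zsmul_eq_mul]
    push_cast
    ring
  · -- the singular vector pair count
    rintro A ⟨μ, hμinj, hμ0, hv⟩
    choose v hv0 hvv using hv
    set f : Module.End ℂ (Fin (m + 1) → ℂ) := Matrix.mulVecLin (Aᵀ * A) with hf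
    have hfapp : ∀ w, f w = (Aᵀ * A).mulVec w := fun w => rfl
    have hev : ∀ i, f.HasEigenvector (μ i) (v i) := fun i =>
      ⟨Module.End.mem_eigenspace_iff.2 (by rw [hfapp]; exact hvv i), hv0 i⟩
    have hli : LinearIndependent ℂ v :=
      Module.End.eigenvectors_linearIndependent' f μ hμinj v hev
    have hcard : Fintype.card (Fin (m + 1)) = Module.finrank ℂ (Fin (m + 1) → ℂ) := by
      simp
    set B := basisOfLinearIndependentOfCardEqFinrank hli hcard with hB
    have hBcoe : ∀ i, B i = v i := fun i => by
      rw [hB, coe_basisOfLinearIndependentOfCardEqFinrank]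
    -- key eigenvector classification
    have claim : ∀ (y : Fin (m + 1) → ℂ) (c : ℂ), y ≠ 0 →
        (Aᵀ * A).mulVec y = c • y → ∃ i, c = μ i ∧ ∃ d : ℂ, d ≠ 0 ∧ y = d • v i := by
      intro y c hy0 hyc
      set g : Fin (m + 1) → ℂ := fun k => B.repr y k with hg
      have hy : ∑ k, g k • v k = y := by
        simp only [hg]
        conv_rhs => rw [← B.sum_repr y]
        exact Finset.sum_congr rfl fun k _ => by rw [hBcoe]
      have hA : (Aᵀ * A).mulVec y = ∑ k, (g k * μ k) • v k := by
        conv_lhs => rw [← hy]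
        rw [show (Aᵀ * A).mulVec (∑ k, g k • v k) = ∑ k, g k • (Aᵀ * A).mulVec (v k) by
          simp only [← Matrix.mulVecLin_apply, map_sum, _root_.map_smul]]
        refine Finset.sum_congr rfl fun k _ => ?_
        rw [hvv k, smul_smul]
      have hc : c • y = ∑ k, (c * g k) • v k := by
        conv_lhs => rw [← hy, Finset.smul_sum]
        exact Finset.sum_congr rfl fun k _ => by rw [smul_smul]
      have heq : ∑ k, (g k * μ k) • v k = ∑ k, (c * g k) • v k := by
        rw [← hA, ← hc]; exact hyc
      have h1 : ∑ k, ((μ k - c) * g k) • v k = 0 := by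
        have : ∀ k ∈ Finset.univ, ((μ k - c) * g k) • v k
            = (g k * μ k) • v k - (c * g k) • v k := by
          intro k _
          rw [← sub_smul]; congr 1; ring
        rw [Finset.sum_congr rfl this, Finset.sum_sub_distrib, heq, sub_self]
      have hcoef : ∀ k, (μ k - c) * g k = 0 := Fintype.linearIndependent_iff.1 hli _ h1
      have hgi : ∃ i, g i ≠ 0 := by
        by_contra h
        push_neg at h
        apply hy0
        rw [← hy]
        simp [h]
      obtain ⟨i, hgi⟩ := hgi
      have hci : c = μ i := by
        have := hcoef i
        rcases mul_eq_zero.1 this with h | h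
        · linear_combination -h
        · exact absurd h hgi
      refine ⟨i, hci, g i, hgi, ?_⟩
      rw [← hy, Finset.sum_eq_single i]
      · intro k _ hk
        have : g k = 0 := by
          rcases mul_eq_zero.1 (hcoef k) with h | h
          · exfalso; apply hk; apply hμinj
            rw [← sub_eq_zero] at hci ⊢
            rw [show μ k - μ i = (μ k - c) + (c - μ i) by ring, h, hci, add_zero]
          · exact h
        rw [this, zero_smul]
      · intro h; exact absurd (Finset.mem_univ i) h
    -- the map enumerating singular pairs
    set G : Fin (m + 1) → Submodule ℂ (Fin (n + 1) → ℂ) × Submodule ℂ (Fin (m + 1) → ℂ) :=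
      fun i => (Submodule.span ℂ {A.mulVec (v i)}, Submodule.span ℂ {v i}) with hG
    have hAv0 : ∀ i, A.mulVec (v i) ≠ 0 := by
      intro i h
      have : (Aᵀ * A).mulVec (v i) = 0 := by
        rw [← Matrix.mulVec_mulVec, h, Matrix.mulVec_zero]
      rw [hvv i] at this
      rcases smul_eq_zero.1 this with h' | h'
      · exact hμ0 i h'
      · exact hv0 i h'
    have hset : {T : Submodule ℂ (Fin (n + 1) → ℂ) × Submodule ℂ (Fin (m + 1) → ℂ) |
        ∃ x y, x ≠ 0 ∧ y ≠ 0 ∧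
          T = (Submodule.span ℂ {x}, Submodule.span ℂ {y}) ∧
          ∃ μ ν : ℂ, A.mulVec y = μ • x ∧ Aᵀ.mulVec x = ν • y} = Set.range G := by
      ext T
      constructor
      · rintro ⟨x, y, hx0, hy0, hT, μ', ν', hAy, hAx⟩
        have hATA : (Aᵀ * A).mulVec y = (μ' * ν') • y := by
          rw [← Matrix.mulVec_mulVec, hAy, Matrix.mulVec_smul, hAx, smul_smul]
        obtain ⟨i, hci, d, hd0, hyd⟩ := claim y (μ' * ν') hy0 hATA
        have hμ' : μ' ≠ 0 := by
          intro h
          apply hμ0 i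
          rw [← hci, h, zero_mul]
        refine ⟨i, ?_⟩
        rw [hG, hT]
        have hspan_y : Submodule.span ℂ {y} = Submodule.span ℂ {v i} := by
          rw [hyd]
          exact Submodule.span_singleton_smul_eq (IsUnit.mk0 d hd0) _
        have hx : x = (μ'⁻¹ * d) • A.mulVec (v i) := by
          have : A.mulVec y = d • A.mulVec (v i) := by
            rw [hyd, Matrix.mulVec_smul]
          rw [this] at hAy
          calc x = μ'⁻¹ • (μ' • x) := by rw [smul_smul, inv_mul_cancel₀ hμ', one_smul]
            _ = μ'⁻¹ • (d • A.mulVec (v i)) := by rw [← hAy]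
            _ = (μ'⁻¹ * d) • A.mulVec (v i) := by rw [smul_smul]
        have hspan_x : Submodule.span ℂ {x} = Submodule.span ℂ {A.mulVec (v i)} := by
          rw [hx]
          exact Submodule.span_singleton_smul_eq
            (IsUnit.mk0 _ (mul_ne_zero (inv_ne_zero hμ') hd0)) _
        rw [Prod.mk.injEq]
        exact ⟨(hspan_x).symm, (hspan_y).symm⟩
      · rintro ⟨i, rfl⟩
        exact ⟨A.mulVec (v i), v i, hAv0 i, hv0 i, rfl, 1, μ i,
          by rw [one_smul], by rw [Matrix.mulVec_mulVec]; exact hvv i⟩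
    have hGinj : Function.Injective G := by
      intro i j hij
      by_contra hne
      have h2 : Submodule.span ℂ {v i} = Submodule.span ℂ {v j} := congrArg Prod.snd hij
      have hvj : v j ∈ Submodule.span ℂ (v '' {i}) := by
        rw [Set.image_singleton, h2]
        exact Submodule.mem_span_singleton_self _
      exact hli.notMem_span_image (by simp [Ne.symm hne]) hvj
    rw [hset, ← Set.image_univ, Set.ncard_image_of_injective _ hGinj, Set.ncard_univ]
    simp [Nat.card_eq_fintype_card]
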